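/- arXiv:1903.11138 — 6 statements merged into one kernel-verified Lean document; each statement's English description precedes it below -/
import Mathlib

section
/- HyperLTL-SAT is RE-hard: the halting problem (the set of codes e such that the e-th partial computable function halts on input e) many-one reduces to the set of (Gödel codes of) satisfiable HyperLTL formulas. -/
/-- A trace over atomic propositions (modeled as naturals). -/
abbrev Trace : Type := ℕ → Set ℕ

/-- HyperLTL formulas: atomic propositions `a` and trace variables `π` are naturals. -/
inductive HLTL : Type
  | tt    : HLTL
  | atom  : ℕ → ℕ → HLTL            -- `atom a π` is `a_π`
  | neg   : HLTL → HLTL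
  | or    : HLTL → HLTL → HLTL
  | next  : HLTL → HLTL
  | until_ : HLTL → HLTL → HLTL
  | ex    : ℕ → HLTL → HLTL          -- `∃ π. ψ`
  | all   : ℕ → HLTL → HLTL          -- `∀ π. ψ`

namespace HLTL

/-- Shift every trace in the range of an assignment by `i` steps. -/
def shift (A : ℕ → Trace) (i : ℕ) : ℕ → Trace := fun π n => A π (n + i)

/-- Semantics of HyperLTL: `sat T ψ A` is `A ⊨_T ψ`. -/
def sat (T : Set Trace) : HLTL → (ℕ → Trace) → Prop
  | .tt, _ => True
  | .atom a π, A => a ∈ A π 0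
  | .neg φ, A => ¬ sat T φ A
  | .or φ ψ, A => sat T φ A ∨ sat T ψ A
  | .next φ, A => sat T φ (shift A 1)
  | .until_ φ ψ, A => ∃ i, sat T ψ (shift A i) ∧ ∀ j < i, sat T φ (shift A j)
  | .ex π φ, A => ∃ t ∈ T, sat T φ (Function.update A π t)
  | .all π φ, A => ∀ t ∈ T, sat T φ (Function.update A π t)

/-- Quantifier-free formulas. -/
def quantFree : HLTL → Bool
  | .tt => true
  | .atom _ _ => true
  | .neg φ => quantFree φ
  | .or φ ψ => quantFree φ && quantFree ψ
  | .next φ => quantFree φ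
  | .until_ φ ψ => quantFree φ && quantFree ψ
  | .ex _ _ => false
  | .all _ _ => false

/-- All trace quantifiers occur in a prefix. -/
def prenex : HLTL → Bool
  | .ex _ φ => prenex φ
  | .all _ φ => prenex φ
  | φ => quantFree φ

/-- Free trace variables of a formula. -/
def free : HLTL → Finset ℕ
  | .tt => ∅
  | .atom _ π => {π}
  | .neg φ => free φ
  | .or φ ψ => free φ ∪ free ψ
  | .next φ => free φ
  | .until_ φ ψ => free φ ∪ free ψ
  | .ex π φ => (free φ).erase π
  | .all π φ => (free φ).erase π

/-- A HyperLTL formula (as in the grammar): a closed sentence with all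
trace quantifiers in a prefix. -/
def Sentence (ψ : HLTL) : Prop := prenex ψ = true ∧ free ψ = ∅

/-- `T` satisfies `ψ`: `T` is nonempty and `∅ ⊨_T ψ` (for closed `ψ` the
trace assignment is irrelevant, so we quantify over all assignments). -/
def SatBy (T : Set Trace) (ψ : HLTL) : Prop :=
  T.Nonempty ∧ ∀ A : ℕ → Trace, sat T ψ A

/-- HyperLTL satisfiability. -/
def Satisfiable (ψ : HLTL) : Prop := ∃ T : Set Trace, SatBy T ψ

/-- A computable injective Gödel encoding of HyperLTL formulas. -/
def encode : HLTL → ℕ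
  | .tt => 0
  | .atom a π => 8 * Nat.pair a π + 1
  | .neg φ => 8 * encode φ + 2
  | .or φ ψ => 8 * Nat.pair (encode φ) (encode ψ) + 3
  | .next φ => 8 * encode φ + 4
  | .until_ φ ψ => 8 * Nat.pair (encode φ) (encode ψ) + 5
  | .ex π φ => 8 * Nat.pair π (encode φ) + 6
  | .all π φ => 8 * Nat.pair π (encode φ) + 7

end HLTL

/-- The set of Gödel codes of satisfiable (closed, prenex) HyperLTL formulas. -/
def HyperLTLSatCode (n : ℕ) : Prop :=
  ∃ ψ : HLTL, HLTL.Sentence ψ ∧ HLTL.encode ψ = n ∧ HLTL.Satisfiable ψ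

/-- A predicate on ℕ is computably enumerable iff it is the domain of a
partial computable function. -/
def REpred (p : ℕ → Prop) : Prop :=
  ∃ f : ℕ →. ℕ, Partrec f ∧ ∀ n, p n ↔ (f n).Dom

/-!
A trace encodes a configuration of a TM2 machine together with a fuel `m`: the label and the
internal state are read at time `0`, the `i`-th cell of every stack at time `i`, and the fuel is the
length of the prefix on which `countAtom` holds. The sentence `∃π₀ ∀π₁ ∃π₂` says that `π₀` encodes
the initial configuration, and that every `π₁` is halted or has positive fuel and a successor `π₂`
encoding the next configuration with one unit of fuel less. One TM2 step only touches boundedly many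
cells at the top of each stack and shifts the rest, so the successor relation is an LTL property
of `(π₁, π₂)`. As fuel decreases, every model contains a halting run from the initial
configuration; conversely the configurations that halt within their fuel form a model.

For Mathlib's TM2 simulation of partial recursive functions, run on a code for
`2 ^ e - 1 ↦ eval e e`, the input word is `bit1 ^ e` followed by `cons`, so the code of the formula
is primitive recursive in `e`.
-/

lemma Nat.exists_forall_iff_lt_iff {p : ℕ → Prop} :
    (∃ m, ∀ i, p i ↔ i < m) ↔ (∀ i, p (i + 1) → p i) ∧ ∃ i, ¬ p i := by
  classical
  constructor
  · rintro ⟨m, hm⟩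
    exact ⟨fun i hi => (hm i).2 (Nat.lt_of_succ_lt ((hm _).1 hi)), m,
      fun h => lt_irrefl m ((hm m).1 h)⟩
  · rintro ⟨hdown, hfin⟩
    refine ⟨Nat.find hfin, fun i => ⟨fun hi => ?_, fun hi => not_not.1 (Nat.find_min hfin hi)⟩⟩
    by_contra hle
    exact Nat.find_spec hfin (antitone_nat_of_succ_le (f := p) hdown (not_lt.1 hle) hi)

lemma List.forall_getElem?_append_iff {α : Type*} {p r : List α} {Q : ℕ → α → Prop} :
    (∀ i a, Q i a ↔ (p ++ r)[i]? = some a) ↔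
      (∀ i < p.length, ∀ a, Q i a ↔ p[i]? = some a) ∧
        ∀ i a, Q (p.length + i) a ↔ r[i]? = some a := by
  constructor
  · intro h
    exact ⟨fun i hi a => by rw [h, List.getElem?_append_left hi],
      fun i a => by rw [h, List.getElem?_append_right (by omega), Nat.add_sub_cancel_left]⟩
  · rintro ⟨hp, hr⟩ i a
    rcases lt_or_ge i p.length with hi | hi
    · rw [hp i hi, List.getElem?_append_left hi]
    · obtain ⟨j, rfl⟩ := Nat.exists_eq_add_of_le hi
      rw [hr, List.getElem?_append_right hi, Nat.add_sub_cancel_left]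

lemma Primrec.nat_affine (a b : ℕ) : Primrec fun x : ℕ => a * x + b :=
  Primrec.nat_add.comp (Primrec.nat_mul.comp (.const a) .id) (.const b)

section HaltsWithin

variable {α : Type*}

def HaltsWithin (f : α → Option α) : ℕ → α → Prop
  | 0, a => f a = none
  | m + 1, a => ∀ b ∈ f a, HaltsWithin f m b

variable {f : α → Option α}

lemma haltsWithin_of_eq_none {a : α} (h : f a = none) : ∀ m, HaltsWithin f m a
  | 0 => h
  | _ + 1 => by simp [HaltsWithin, h]

lemma eval_dom_iff_exists_haltsWithin {a : α} :
    (StateTransition.eval f a).Dom ↔ ∃ m, HaltsWithin f m a := by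
  constructor
  · intro hdom
    obtain ⟨b, hmem⟩ := Part.dom_iff_mem.1 hdom
    obtain ⟨hreach, hb⟩ := StateTransition.mem_eval.1 hmem
    clear hdom hmem
    induction hreach using Relation.ReflTransGen.head_induction_on with
    | refl => exact ⟨0, hb⟩
    | head hstep _ ih =>
      obtain ⟨m, hm⟩ := ih
      exact ⟨m + 1, fun c hc => by rwa [Option.mem_unique hc hstep]⟩
  · rintro ⟨m, hm⟩
    induction m generalizing a with
    | zero => exact Part.dom_iff_mem.2 ⟨a, StateTransition.mem_eval.2 ⟨.refl, hm⟩⟩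
    | succ m ih =>
      cases hfa : f a with
      | none => exact Part.dom_iff_mem.2 ⟨a, StateTransition.mem_eval.2 ⟨.refl, hfa⟩⟩
      | some b =>
        rw [StateTransition.reaches_eval (.single hfa)]
        exact ih (hm b hfa)

end HaltsWithin

namespace HLTL

def and_ (φ ψ : HLTL) : HLTL := .neg (.or (.neg φ) (.neg ψ))

def iff_ (φ ψ : HLTL) : HLTL := and_ (.or (.neg φ) ψ) (.or (.neg ψ) φ)

def always (φ : HLTL) : HLTL := .neg (.until_ .tt (.neg φ))

def eventually (φ : HLTL) : HLTL := .until_ .tt φ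

def nextN : ℕ → HLTL → HLTL
  | 0, φ => φ
  | n + 1, φ => .next (nextN n φ)

def bigAnd (l : List HLTL) : HLTL := l.foldr and_ .tt

def bigOr (l : List HLTL) : HLTL := l.foldr .or (.neg .tt)

def lit (b : Bool) (a π : ℕ) : HLTL := cond b (.atom a π) (.neg (.atom a π))

@[simp] lemma shift_apply (A : ℕ → Trace) (i π n : ℕ) : shift A i π n = A π (n + i) := rfl

@[simp] lemma shift_zero (A : ℕ → Trace) : shift A 0 = A := rfl

@[simp] lemma shift_shift (A : ℕ → Trace) (i j : ℕ) : shift (shift A i) j = shift A (j + i) := by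
  funext π n
  simp [Nat.add_assoc]

section Semantics

variable {T : Set Trace} {A : ℕ → Trace} {φ ψ : HLTL}

@[simp] lemma sat_tt : sat T .tt A := trivial
@[simp] lemma sat_atom {a π : ℕ} : sat T (.atom a π) A ↔ a ∈ A π 0 := .rfl
@[simp] lemma sat_neg : sat T (.neg φ) A ↔ ¬ sat T φ A := .rfl
@[simp] lemma sat_or : sat T (.or φ ψ) A ↔ sat T φ A ∨ sat T ψ A := .rfl
@[simp] lemma sat_next : sat T (.next φ) A ↔ sat T φ (shift A 1) := .rfl
@[simp] lemma sat_ex {π : ℕ} :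
    sat T (.ex π φ) A ↔ ∃ t ∈ T, sat T φ (Function.update A π t) := .rfl
@[simp] lemma sat_all {π : ℕ} :
    sat T (.all π φ) A ↔ ∀ t ∈ T, sat T φ (Function.update A π t) := .rfl

@[simp] lemma sat_and_ : sat T (and_ φ ψ) A ↔ sat T φ A ∧ sat T ψ A := by
  simp [and_]

@[simp] lemma sat_iff_ : sat T (iff_ φ ψ) A ↔ (sat T φ A ↔ sat T ψ A) := by
  simp only [iff_, sat_and_, sat_or, sat_neg]
  tauto

@[simp] lemma sat_always : sat T (always φ) A ↔ ∀ i, sat T φ (shift A i) := by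
  simp [always, sat]

@[simp] lemma sat_eventually : sat T (eventually φ) A ↔ ∃ i, sat T φ (shift A i) := by
  simp [eventually, sat]

@[simp] lemma sat_nextN (n : ℕ) : sat T (nextN n φ) A ↔ sat T φ (shift A n) := by
  induction n generalizing A with
  | zero => rfl
  | succ n ih => simp [nextN, ih]

@[simp] lemma sat_bigAnd (l : List HLTL) : sat T (bigAnd l) A ↔ ∀ φ ∈ l, sat T φ A := by
  induction l <;> simp_all [bigAnd]

@[simp] lemma sat_bigOr (l : List HLTL) : sat T (bigOr l) A ↔ ∃ φ ∈ l, sat T φ A := by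
  induction l <;> simp_all [bigOr]

@[simp] lemma sat_lit {b : Bool} {a π : ℕ} : sat T (lit b a π) A ↔ (a ∈ A π 0 ↔ b) := by
  cases b <;> simp [lit]

end Semantics

def QFBelow (n : ℕ) (φ : HLTL) : Prop := quantFree φ ∧ ∀ π ∈ free φ, π < n

section QFBelow

variable {n : ℕ} {φ ψ : HLTL}

@[simp] lemma qfBelow_tt : QFBelow n .tt := by simp [QFBelow, quantFree, free]
@[simp] lemma qfBelow_atom {a π : ℕ} : QFBelow n (.atom a π) ↔ π < n := by
  simp [QFBelow, quantFree, free]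
@[simp] lemma qfBelow_neg : QFBelow n (.neg φ) ↔ QFBelow n φ := .rfl
@[simp] lemma qfBelow_next : QFBelow n (.next φ) ↔ QFBelow n φ := .rfl
@[simp] lemma qfBelow_or : QFBelow n (.or φ ψ) ↔ QFBelow n φ ∧ QFBelow n ψ := by
  simp only [QFBelow, quantFree, free, Bool.and_eq_true, Finset.mem_union]
  aesop
@[simp] lemma qfBelow_until : QFBelow n (.until_ φ ψ) ↔ QFBelow n φ ∧ QFBelow n ψ := by
  simp only [QFBelow, quantFree, free, Bool.and_eq_true, Finset.mem_union]
  aesop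

@[simp] lemma qfBelow_and_ : QFBelow n (and_ φ ψ) ↔ QFBelow n φ ∧ QFBelow n ψ := by
  simp [and_]
@[simp] lemma qfBelow_iff_ : QFBelow n (iff_ φ ψ) ↔ QFBelow n φ ∧ QFBelow n ψ := by
  simp [iff_]
  tauto
@[simp] lemma qfBelow_always : QFBelow n (always φ) ↔ QFBelow n φ := by simp [always]
@[simp] lemma qfBelow_eventually : QFBelow n (eventually φ) ↔ QFBelow n φ := by
  simp [eventually]
@[simp] lemma qfBelow_nextN (k : ℕ) : QFBelow n (nextN k φ) ↔ QFBelow n φ := by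
  induction k <;> simp_all [nextN]
@[simp] lemma qfBelow_bigAnd (l : List HLTL) : QFBelow n (bigAnd l) ↔ ∀ φ ∈ l, QFBelow n φ := by
  induction l <;> simp_all [bigAnd]
@[simp] lemma qfBelow_bigOr (l : List HLTL) : QFBelow n (bigOr l) ↔ ∀ φ ∈ l, QFBelow n φ := by
  induction l <;> simp_all [bigOr]
@[simp] lemma qfBelow_lit {b : Bool} {a π : ℕ} : QFBelow n (lit b a π) ↔ π < n := by
  cases b <;> simp [lit]

end QFBelow

lemma sentence_ex_all_ex {φ : HLTL} (h : QFBelow 3 φ) : Sentence (.ex 0 (.all 1 (.ex 2 φ))) := by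
  have hprenex : prenex φ = true := by cases φ <;> simp_all [QFBelow, prenex, quantFree]
  refine ⟨hprenex, Finset.eq_empty_of_forall_notMem fun π hπ => ?_⟩
  simp only [free, Finset.mem_erase] at hπ
  have := h.2 π hπ.2.2.2
  omega

theorem encode_injective : Function.Injective encode := by
  intro φ ψ h
  induction φ generalizing ψ <;> cases ψ <;> simp only [encode] at h <;> try omega
  all_goals
    simp only [add_left_inj, mul_right_inj' (show (8 : ℕ) ≠ 0 by norm_num), Nat.pair_eq_pair] at h ⊢
  all_goals aesop

def PrimrecCode {α : Type*} [Primcodable α] (f : α → HLTL) : Prop :=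
  Primrec fun a => encode (f a)

namespace PrimrecCode

variable {α : Type*} [Primcodable α] {f g : α → HLTL}

lemma const (φ : HLTL) : PrimrecCode fun _ : α => φ := Primrec.const _

lemma neg (hf : PrimrecCode f) : PrimrecCode fun a => .neg (f a) :=
  (Primrec.nat_affine 8 2).comp hf

lemma or (hf : PrimrecCode f) (hg : PrimrecCode g) : PrimrecCode fun a => .or (f a) (g a) :=
  (Primrec.nat_affine 8 3).comp (Primrec₂.natPair.comp hf hg)

lemma and_ (hf : PrimrecCode f) (hg : PrimrecCode g) : PrimrecCode fun a => and_ (f a) (g a) :=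
  (hf.neg.or hg.neg).neg

lemma ex (π : ℕ) (hf : PrimrecCode f) : PrimrecCode fun a => .ex π (f a) :=
  (Primrec.nat_affine 8 6).comp (Primrec₂.natPair.comp (.const π) hf)

lemma all (π : ℕ) (hf : PrimrecCode f) : PrimrecCode fun a => .all π (f a) :=
  (Primrec.nat_affine 8 7).comp (Primrec₂.natPair.comp (.const π) hf)

lemma bigAnd_map {β : Type*} {l : List β} {F : α → β → HLTL}
    (h : ∀ b ∈ l, PrimrecCode fun a => F a b) : PrimrecCode fun a => bigAnd (l.map (F a)) := by
  induction l with
  | nil => exact const _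
  | cons b l ih =>
    exact (h b List.mem_cons_self).and_ (ih fun b hb => h b (List.mem_cons_of_mem _ hb))

lemma iterate_and_next (ψ φ : HLTL) :
    PrimrecCode fun n : ℕ => (fun χ => HLTL.and_ ψ (.next χ))^[n] φ := by
  let G : ℕ → ℕ := fun x => 8 * (8 * Nat.pair (8 * encode ψ + 2) (8 * (8 * x + 4) + 2) + 3) + 2
  have hG : Primrec G := (Primrec.nat_affine 8 2).comp ((Primrec.nat_affine 8 3).comp
    (Primrec₂.natPair.comp (.const _) ((Primrec.nat_affine 8 2).comp (Primrec.nat_affine 8 4))))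
  have hsemiconj : Function.Semiconj encode (fun χ => HLTL.and_ ψ (.next χ)) G := fun _ => rfl
  exact (Primrec.nat_iterate .id (.const (encode φ)) (hG.comp .snd).to₂).of_eq fun n =>
    (hsemiconj.iterate_right n φ).symm

end PrimrecCode

end HLTL

namespace TM2Encoding

open HLTL Turing

variable {K : Type*} {Γ : K → Type*} {Λ : Type*} {σ : Type*}

def splice (L P : ∀ k, List (Γ k)) (C : K → ℕ) : ∀ k, List (Γ k) :=
  fun k => P k ++ (L k).drop (C k)

lemma splice_nil_zero (L : ∀ k, List (Γ k)) : splice L (fun _ => []) (fun _ => 0) = L := rfl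

section

variable [DecidableEq K]

lemma splice_update_pending (L P : ∀ k, List (Γ k)) (C : K → ℕ) (k : K) (w : List (Γ k)) :
    splice L (Function.update P k w) C =
      Function.update (splice L P C) k (w ++ (L k).drop (C k)) := by
  funext k'
  rcases eq_or_ne k' k with rfl | hk <;> simp [splice, *]

lemma splice_update_consumed (L P : ∀ k, List (Γ k)) (C : K → ℕ) {k : K} (hP : P k = []) :
    splice L P (Function.update C k (C k + 1)) =
      Function.update (splice L P C) k ((L k).drop (C k + 1)) := by
  funext k'
  rcases eq_or_ne k' k with rfl | hk <;> simp [splice, *]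

lemma step_eq_none_iff {M : Λ → TM2.Stmt Γ Λ σ} {c : TM2.Cfg Γ Λ σ} :
    TM2.step M c = none ↔ c.l = none := by
  rcases c with ⟨_ | q, v, L⟩ <;> simp

lemma step_label_mem {S : Finset Λ} {M : Λ → TM2.Stmt Γ Λ σ}
    (hM : ∀ q ∈ S, TM2.SupportsStmt S (M q)) {c c' : TM2.Cfg Γ Λ σ} (hc : c.l ∈ S.insertNone)
    (h : TM2.step M c = some c') : c'.l ∈ S.insertNone := by
  rcases c with ⟨_ | q, v, L⟩
  · simp at h
  · exact @TM2.step_supports _ _ _ _ ⟨q⟩ _ M _ ⟨Finset.some_mem_insertNone.1 hc, hM⟩ _ _ h hc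

end

variable [Fintype K] [∀ k, Fintype (Γ k)] [DecidableEq Λ] [Fintype σ]
  {T : Set Trace} {A : ℕ → Trace}

def countAtom : ℕ := Nat.pair 0 0

noncomputable def varAtom (s : σ) : ℕ := Nat.pair 1 (Fintype.equivFin σ s)

noncomputable def symAtom (k : K) (γ : Γ k) : ℕ :=
  Nat.pair 2 (Fintype.equivFin (Σ k, Γ k) ⟨k, γ⟩)

/-- Injective only on `S.insertNone`. -/
noncomputable def labelAtom (S : Finset Λ) (o : Option Λ) : ℕ :=
  Nat.pair 3 (o.elim 0 fun q => S.toList.idxOf q + 1)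

lemma labelAtom_injOn (S : Finset Λ) : Set.InjOn (labelAtom S) S.insertNone := by
  rintro (_ | q) hq (_ | q') - h <;> simp_all [labelAtom, Nat.pair_eq_pair]
  exact (List.idxOf_inj (by simpa using hq)).1 h

structure Encodes (S : Finset Λ) (c : TM2.Cfg Γ Λ σ) (m : ℕ) (t : Trace) : Prop where
  count : ∀ i, countAtom ∈ t i ↔ i < m
  var : ∀ s, varAtom s ∈ t 0 ↔ s = c.var
  label : ∀ o ∈ S.insertNone, labelAtom S o ∈ t 0 ↔ o = c.l
  stk : ∀ k i γ, symAtom k γ ∈ t i ↔ (c.stk k)[i]? = some γ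

noncomputable def toTrace (S : Finset Λ) (c : TM2.Cfg Γ Λ σ) (m : ℕ) : Trace := fun i =>
  {a | (a = countAtom ∧ i < m) ∨ (i = 0 ∧ (a = varAtom c.var ∨ a = labelAtom S c.l)) ∨
    ∃ k γ, a = symAtom k γ ∧ (c.stk k)[i]? = some γ}

lemma encodes_toTrace {S : Finset Λ} {c : TM2.Cfg Γ Λ σ} (hc : c.l ∈ S.insertNone) (m : ℕ) :
    Encodes S c m (toTrace S c m) where
  count i := by simp [toTrace, countAtom, varAtom, labelAtom, symAtom, Nat.pair_eq_pair]
  var s := by simp [toTrace, countAtom, varAtom, labelAtom, symAtom, Nat.pair_eq_pair, Fin.val_inj]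
  label o ho := by
    have h := (labelAtom_injOn S).eq_iff ho hc
    simp only [labelAtom, Nat.pair_eq_pair, true_and] at h
    simpa [toTrace, countAtom, varAtom, labelAtom, symAtom, Nat.pair_eq_pair] using h
  stk k i γ := by
    simp only [toTrace, countAtom, varAtom, labelAtom, symAtom, Set.mem_ofPred_eq,
      Nat.pair_eq_pair, Fin.val_inj, EmbeddingLike.apply_eq_iff_eq, Sigma.mk.inj_iff]
    constructor
    · rintro (⟨⟨h, -⟩, -⟩ | ⟨-, ⟨h, -⟩ | ⟨h, -⟩⟩ | ⟨k', γ', ⟨-, rfl, h⟩, hk⟩) <;>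
        first | omega | skip
      cases h
      exact hk
    · exact fun h => .inr (.inr ⟨k, γ, ⟨trivial, rfl, .rfl⟩, h⟩)

section

variable [DecidableEq K] {M : Λ → TM2.Stmt Γ Λ σ} {S : Finset Λ}

variable (M S) in
noncomputable def haltingTraces : Set Trace :=
  {t | ∃ c m, c.l ∈ S.insertNone ∧ HaltsWithin (TM2.step M) m c ∧ t = toTrace S c m}

lemma haltsWithin_of_successors (hM : ∀ q ∈ S, TM2.SupportsStmt S (M q)) {T : Set Trace}
    (hT : ∀ t ∈ T, ∃ t' ∈ T, ∀ c m, Encodes S c m t → c.l ∈ S.insertNone →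
      c.l = none ∨ 0 < m ∧ ∃ c', TM2.step M c = some c' ∧ Encodes S c' (m - 1) t')
    {m : ℕ} {c : TM2.Cfg Γ Λ σ} {t : Trace} (ht : t ∈ T) (henc : Encodes S c m t)
    (hc : c.l ∈ S.insertNone) : HaltsWithin (TM2.step M) m c := by
  induction m generalizing c t with
  | zero =>
    obtain ⟨t', -, hsucc⟩ := hT t ht
    rcases hsucc c 0 henc hc with hl | ⟨hpos, -⟩
    · exact step_eq_none_iff.2 hl
    · exact absurd hpos (lt_irrefl 0)
  | succ m ih =>
    obtain ⟨t', ht', hsucc⟩ := hT t ht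
    rcases hsucc c _ henc hc with hl | ⟨-, c', hstep, henc'⟩
    · exact haltsWithin_of_eq_none (step_eq_none_iff.2 hl) _
    · intro b hb
      obtain rfl : b = c' := Option.some_inj.1 (hb.symm.trans hstep)
      exact ih ht' henc' (step_label_mem hM hc hstep)

lemma exists_successor_mem_haltingTraces (hM : ∀ q ∈ S, TM2.SupportsStmt S (M q))
    {c : TM2.Cfg Γ Λ σ} {m : ℕ} (hc : c.l ∈ S.insertNone) (hm : HaltsWithin (TM2.step M) m c) :
    ∃ t' ∈ haltingTraces M S,
      c.l = none ∨ 0 < m ∧ ∃ c', TM2.step M c = some c' ∧ Encodes S c' (m - 1) t' := by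
  cases hstep : TM2.step M c with
  | none => exact ⟨_, ⟨c, m, hc, hm, rfl⟩, .inl (step_eq_none_iff.1 hstep)⟩
  | some c' =>
    cases m with
    | zero => simp [HaltsWithin, hstep] at hm
    | succ m =>
      have hc' := step_label_mem hM hc hstep
      exact ⟨_, ⟨c', m, hc', hm c' hstep, rfl⟩, .inr ⟨m.succ_pos, c', rfl, encodes_toTrace hc' m⟩⟩

end

variable (Γ) in
noncomputable def copiesStack (k : K) (d e : ℕ) : HLTL :=
  always (bigAnd (Finset.univ.toList.map fun γ : Γ k =>
    iff_ (nextN d (.atom (symAtom k γ) 2)) (nextN e (.atom (symAtom k γ) 1))))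

lemma sat_copiesStack {k : K} {d e : ℕ} :
    sat T (copiesStack Γ k d e) A ↔
      ∀ i (γ : Γ k), symAtom k γ ∈ A 2 (d + i) ↔ symAtom k γ ∈ A 1 (e + i) := by
  simp [copiesStack, add_comm]

def countDecrements : HLTL := always (iff_ (.atom countAtom 2) (.next (.atom countAtom 1)))

variable [∀ k, DecidableEq (Γ k)]

noncomputable def cellIs (π : ℕ) (k : K) (s : Option (Γ k)) : HLTL :=
  bigAnd (Finset.univ.toList.map fun γ => lit (decide (s = some γ)) (symAtom k γ) π)

noncomputable def spell (π : ℕ) (k : K) : List (Γ k) → HLTL → HLTL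
  | [], φ => φ
  | γ :: w, φ => and_ (cellIs π k (some γ)) (.next (spell π k w φ))

noncomputable def stackIs (π : ℕ) (k : K) (w : List (Γ k)) : HLTL :=
  spell π k w (always (cellIs π k (none : Option (Γ k))))

def countIsPrefix (π : ℕ) : HLTL :=
  and_ (always (.or (.atom countAtom π) (.neg (.next (.atom countAtom π)))))
    (eventually (.neg (.atom countAtom π)))

@[simp] lemma sat_cellIs {π : ℕ} {k : K} {s : Option (Γ k)} :
    sat T (cellIs π k s) A ↔ ∀ γ, symAtom k γ ∈ A π 0 ↔ s = some γ := by
  simp [cellIs]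

lemma sat_spell {π : ℕ} {k : K} (w : List (Γ k)) (φ : HLTL) (A : ℕ → Trace) :
    sat T (spell π k w φ) A ↔
      (∀ i < w.length, ∀ γ, symAtom k γ ∈ A π i ↔ w[i]? = some γ) ∧
        sat T φ (shift A w.length) := by
  induction w generalizing A with
  | nil => simp [spell]
  | cons γ w ih =>
    simp only [spell, sat_and_, sat_next, sat_cellIs, ih, shift_shift, shift_apply,
      List.length_cons, Nat.forall_lt_succ_left]
    simp [and_assoc]

@[simp] lemma sat_stackIs {π : ℕ} {k : K} {w : List (Γ k)} :
    sat T (stackIs π k w) A ↔ ∀ i γ, symAtom k γ ∈ A π i ↔ w[i]? = some γ := by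
  simpa [stackIs, sat_spell, add_comm] using
    (List.forall_getElem?_append_iff (p := w) (r := []) (Q := fun i γ => symAtom k γ ∈ A π i)).symm

@[simp] lemma sat_countIsPrefix {π : ℕ} :
    sat T (countIsPrefix π) A ↔ ∃ m, ∀ i, countAtom ∈ A π i ↔ i < m := by
  simp only [countIsPrefix, sat_and_, sat_always, sat_or, sat_atom, sat_neg, sat_next,
    sat_eventually, shift_shift, shift_apply, zero_add, add_zero, Nat.exists_forall_iff_lt_iff,
    or_iff_not_imp_right, not_not, add_comm]

lemma Encodes.sat_nextN_cellIs {S : Finset Λ} {c : TM2.Cfg Γ Λ σ} {m : ℕ}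
    (h : Encodes S c m (A 1)) (k : K) (i : ℕ) (s : Option (Γ k)) :
    sat T (nextN i (cellIs 1 k s)) A ↔ (c.stk k)[i]? = s := by
  simp only [sat_nextN, sat_cellIs, shift_apply, zero_add, h.stk]
  rw [Option.ext_iff]

lemma qfBelow_cellIs {n π : ℕ} (h : π < n) (k : K) (s : Option (Γ k)) :
    QFBelow n (cellIs π k s) := by
  simp [cellIs, h]

lemma qfBelow_spell {n π : ℕ} (h : π < n) (k : K) (w : List (Γ k)) {φ : HLTL}
    (hφ : QFBelow n φ) : QFBelow n (spell π k w φ) := by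
  induction w <;> simp [spell, qfBelow_cellIs h, *]

lemma stackIs_replicate_append (π : ℕ) (k : K) (γ : Γ k) (n : ℕ) (w : List (Γ k)) :
    stackIs π k (List.replicate n γ ++ w) =
      (fun φ => and_ (cellIs π k (some γ)) (.next φ))^[n] (stackIs π k w) := by
  induction n with
  | zero => rfl
  | succ n ih =>
    rw [Function.iterate_succ_apply', ← ih]
    rfl

variable [DecidableEq σ]

noncomputable def varIs (π : ℕ) (s : σ) : HLTL :=
  bigAnd (Finset.univ.toList.map fun s' => lit (decide (s' = s)) (varAtom s') π)

noncomputable def labelIs (S : Finset Λ) (π : ℕ) (o : Option Λ) : HLTL :=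
  bigAnd (S.insertNone.toList.map fun o' => lit (decide (o' = o)) (labelAtom S o') π)

@[simp] lemma sat_varIs {π : ℕ} {s : σ} :
    sat T (varIs π s) A ↔ ∀ s', varAtom s' ∈ A π 0 ↔ s' = s := by
  simp [varIs]

@[simp] lemma sat_labelIs {S : Finset Λ} {π : ℕ} {o : Option Λ} :
    sat T (labelIs S π o) A ↔ ∀ o' ∈ S.insertNone, labelAtom S o' ∈ A π 0 ↔ o' = o := by
  simp [labelIs]

noncomputable def successorIs (S : Finset Λ) (o : Option Λ) (v : σ) (P : ∀ k, List (Γ k))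
    (C : K → ℕ) : HLTL :=
  and_ (labelIs S 2 o) (and_ (varIs 2 v) (and_ countDecrements
    (bigAnd (Finset.univ.toList.map fun k =>
      and_ (spell 2 k (P k) .tt) (copiesStack Γ k (P k).length (C k))))))

lemma sat_successorIs {S : Finset Λ} {c : TM2.Cfg Γ Λ σ} {m : ℕ} (h : Encodes S c m (A 1))
    (o : Option Λ) (v : σ) (P : ∀ k, List (Γ k)) (C : K → ℕ) :
    sat T (successorIs S o v P C) A ↔ Encodes S ⟨o, v, splice c.stk P C⟩ (m - 1) (A 2) := by
  have hstk (k : K) :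
      sat T (and_ (spell 2 k (P k) .tt) (copiesStack Γ k (P k).length (C k))) A ↔
        ∀ i γ, symAtom k γ ∈ A 2 i ↔ (splice c.stk P C k)[i]? = some γ := by
    simp only [sat_and_, sat_spell, sat_tt, and_true, sat_copiesStack, h.stk, splice,
      List.forall_getElem?_append_iff, List.getElem?_drop]
  simp only [successorIs, sat_and_, sat_labelIs, sat_varIs, countDecrements, sat_always, sat_iff_,
    sat_atom, sat_next, shift_apply, shift_shift, zero_add, h.count, sat_bigAnd, List.mem_map,
    Finset.mem_toList, Finset.mem_univ, true_and, forall_exists_index, forall_apply_eq_imp_iff,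
    hstk]
  constructor
  · rintro ⟨hl, hv, hc, hs⟩
    exact ⟨fun i => by rw [hc]; omega, hv, hl, hs⟩
  · rintro ⟨hc, hv, hl, hs⟩
    exact ⟨hl, hv, fun i => by rw [hc]; omega, hs⟩

noncomputable def initFormula (S : Finset Λ) (c₀ : TM2.Cfg Γ Λ σ) : HLTL :=
  and_ (labelIs S 0 c₀.l) (and_ (varIs 0 c₀.var) (and_ (countIsPrefix 0)
    (bigAnd (Finset.univ.toList.map fun k => stackIs 0 k (c₀.stk k)))))

lemma sat_initFormula {S : Finset Λ} {c₀ : TM2.Cfg Γ Λ σ} :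
    sat T (initFormula S c₀) A ↔ ∃ m, Encodes S c₀ m (A 0) := by
  simp only [initFormula, sat_and_, sat_labelIs, sat_varIs, sat_countIsPrefix, sat_bigAnd,
    List.mem_map, Finset.mem_toList, Finset.mem_univ, true_and, forall_exists_index,
    forall_apply_eq_imp_iff, sat_stackIs]
  constructor
  · rintro ⟨hl, hv, ⟨m, hm⟩, hs⟩
    exact ⟨m, hm, hv, hl, hs⟩
  · rintro ⟨m, hm, hv, hl, hs⟩
    exact ⟨hl, hv, ⟨m, hm⟩, hs⟩

variable [DecidableEq K]

/-- Symbolic execution of `q` from state `v`: so far `P k` has been pushed onto stack `k` and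
`C k` cells of the stack `k` encoded by trace `1` have been popped. The cells of trace `1` that
`q` inspects are unknown when the formula is built, hence the disjunctions over their contents. -/
noncomputable def execStmt (S : Finset Λ) :
    TM2.Stmt Γ Λ σ → σ → (∀ k, List (Γ k)) → (K → ℕ) → HLTL
  | .push k f q, v, P, C => execStmt S q v (Function.update P k (f v :: P k)) C
  | .peek k f q, v, P, C =>
    match P k with
    | γ :: _ => execStmt S q (f v (some γ)) P C
    | [] => bigOr (Finset.univ.toList.map fun s =>
        and_ (nextN (C k) (cellIs 1 k s)) (execStmt S q (f v s) P C))
  | .pop k f q, v, P, C =>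
    match P k with
    | γ :: w => execStmt S q (f v (some γ)) (Function.update P k w) C
    | [] => bigOr (Finset.univ.toList.map fun s =>
        and_ (nextN (C k) (cellIs 1 k s)) (execStmt S q (f v s) P (Function.update C k (C k + 1))))
  | .load g q, v, P, C => execStmt S q (g v) P C
  | .branch p q₁ q₂, v, P, C => cond (p v) (execStmt S q₁ v P C) (execStmt S q₂ v P C)
  | .goto f, v, P, C => successorIs S (some (f v)) v P C
  | .halt, v, P, C => successorIs S none v P C

lemma sat_execStmt {S : Finset Λ} {c : TM2.Cfg Γ Λ σ} {m : ℕ} (h : Encodes S c m (A 1))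
    (q : TM2.Stmt Γ Λ σ) (v : σ) (P : ∀ k, List (Γ k)) (C : K → ℕ) :
    sat T (execStmt S q v P C) A ↔
      Encodes S (TM2.stepAux q v (splice c.stk P C)) (m - 1) (A 2) := by
  induction q generalizing v P C with
  | push k f q ih =>
    rw [execStmt, ih, TM2.stepAux, splice_update_pending]
    rfl
  | peek k f q ih =>
    cases hP : P k with
    | cons γ w => simp [execStmt, hP, ih, splice]
    | nil =>
      have hhead : (splice c.stk P C k).head? = (c.stk k)[C k]? := by simp [splice, hP]
      simp [execStmt, hP, ih, h.sat_nextN_cellIs, hhead]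
  | pop k f q ih =>
    cases hP : P k with
    | cons γ w => simp [execStmt, hP, ih, splice, splice_update_pending]
    | nil =>
      have hhead : (splice c.stk P C k).head? = (c.stk k)[C k]? := by simp [splice, hP]
      have htail : (splice c.stk P C k).tail = (c.stk k).drop (C k + 1) := by
        simp [splice, hP, List.tail_drop]
      simp [execStmt, hP, ih, h.sat_nextN_cellIs, hhead, htail, splice_update_consumed _ _ _ hP]
  | load g q ih => simp [execStmt, ih]
  | branch p q₁ q₂ ih₁ ih₂ => cases hp : p v <;> simp [execStmt, hp, ih₁, ih₂]
  | goto f => simp [execStmt, sat_successorIs h]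
  | halt => simp [execStmt, sat_successorIs h]

lemma qfBelow_execStmt (S : Finset Λ) (q : TM2.Stmt Γ Λ σ) (v : σ) (P : ∀ k, List (Γ k))
    (C : K → ℕ) : QFBelow 3 (execStmt S q v P C) := by
  induction q generalizing v P C with
  | peek k f q ih | pop k f q ih =>
    simp only [execStmt]
    split <;> simp [qfBelow_cellIs, ih]
  | branch p q₁ q₂ ih₁ ih₂ => cases hp : p v <;> simp [execStmt, hp, ih₁, ih₂]
  | _ =>
    simp [execStmt, successorIs, labelIs, varIs, countDecrements, copiesStack, qfBelow_spell, *]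

variable (M : Λ → TM2.Stmt Γ Λ σ) (S : Finset Λ)

noncomputable def stepFormula : HLTL :=
  bigOr (S.toList.map fun q => bigOr (Finset.univ.toList.map fun v =>
    and_ (.atom (labelAtom S (some q)) 1)
      (and_ (.atom (varAtom v) 1) (execStmt S (M q) v (fun _ => []) (fun _ => 0)))))

noncomputable def stepClause : HLTL :=
  .or (.atom (labelAtom S none) 1) (and_ (.atom countAtom 1) (stepFormula M S))

noncomputable def haltFormula (c₀ : TM2.Cfg Γ Λ σ) : HLTL :=
  .ex 0 (.all 1 (.ex 2 (and_ (initFormula S c₀) (stepClause M S))))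

variable {M S}

lemma sat_stepFormula {c : TM2.Cfg Γ Λ σ} {m : ℕ} {q : Λ} (h : Encodes S c m (A 1))
    (hq : c.l = some q) (hqS : q ∈ S) :
    sat T (stepFormula M S) A ↔ Encodes S (TM2.stepAux (M q) c.var c.stk) (m - 1) (A 2) := by
  simp only [stepFormula, sat_bigOr, List.mem_map, Finset.mem_toList, exists_exists_and_eq_and,
    Finset.mem_univ, true_and, exists_exists_eq_and, sat_and_, sat_atom, h.var, sat_execStmt h,
    splice_nil_zero, exists_and_left, exists_eq_left]
  constructor
  · rintro ⟨q', hq', hl, henc⟩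
    obtain rfl : q' = q := by
      simpa [hq] using (h.label _ (Finset.some_mem_insertNone.2 hq')).1 hl
    exact henc
  · exact fun henc => ⟨q, hqS, (h.label _ (Finset.some_mem_insertNone.2 hqS)).2 hq.symm, henc⟩

lemma sat_stepClause {c : TM2.Cfg Γ Λ σ} {m : ℕ} (h : Encodes S c m (A 1))
    (hc : c.l ∈ S.insertNone) :
    sat T (stepClause M S) A ↔
      c.l = none ∨ 0 < m ∧ ∃ c', TM2.step M c = some c' ∧ Encodes S c' (m - 1) (A 2) := by
  have hnone := h.label none Finset.none_mem_insertNone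
  rcases c with ⟨_ | q, v, L⟩
  · simp [stepClause, hnone]
  · simp_all [stepClause, h.count, sat_stepFormula h rfl (Finset.some_mem_insertNone.1 hc)]

lemma eval_dom_of_satisfiable (hM : ∀ q ∈ S, TM2.SupportsStmt S (M q)) {c₀ : TM2.Cfg Γ Λ σ}
    (hc₀ : c₀.l ∈ S.insertNone) (h : Satisfiable (haltFormula M S c₀)) :
    (StateTransition.eval (TM2.step M) c₀).Dom := by
  obtain ⟨T, -, hsat⟩ := h
  have hsat := hsat fun _ _ => ∅
  simp only [haltFormula, sat_ex, sat_all, sat_and_] at hsat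
  obtain ⟨t₀, ht₀, hall⟩ := hsat
  obtain ⟨m, hm⟩ : ∃ m, Encodes S c₀ m t₀ := by
    obtain ⟨t₂, -, hinit, -⟩ := hall t₀ ht₀
    simpa using sat_initFormula.1 hinit
  refine eval_dom_iff_exists_haltsWithin.2
    ⟨m, haltsWithin_of_successors hM (fun t₁ ht₁ => ?_) ht₀ hm hc₀⟩
  obtain ⟨t₂, ht₂, -, hstep⟩ := hall t₁ ht₁
  refine ⟨t₂, ht₂, fun c m henc hc => ?_⟩
  simpa using (sat_stepClause (by simpa using henc) hc).1 hstep

lemma satisfiable_of_eval_dom (hM : ∀ q ∈ S, TM2.SupportsStmt S (M q)) {c₀ : TM2.Cfg Γ Λ σ}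
    (hc₀ : c₀.l ∈ S.insertNone) (h : (StateTransition.eval (TM2.step M) c₀).Dom) :
    Satisfiable (haltFormula M S c₀) := by
  obtain ⟨n, hn⟩ := eval_dom_iff_exists_haltsWithin.1 h
  have ht₀ : toTrace S c₀ n ∈ haltingTraces M S := ⟨c₀, n, hc₀, hn, rfl⟩
  refine ⟨haltingTraces M S, ⟨_, ht₀⟩, fun A => ?_⟩
  simp only [haltFormula, sat_ex, sat_all, sat_and_]
  refine ⟨_, ht₀, ?_⟩
  rintro _ ⟨c, m, hc, hm, rfl⟩
  obtain ⟨t', ht', hsucc⟩ := exists_successor_mem_haltingTraces hM hc hm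
  exact ⟨t', ht', sat_initFormula.2 ⟨n, by simpa using encodes_toTrace hc₀ n⟩,
    (sat_stepClause (by simpa using encodes_toTrace hc m) hc).2 (by simpa using hsucc)⟩

theorem satisfiable_haltFormula_iff (hM : ∀ q ∈ S, TM2.SupportsStmt S (M q))
    {c₀ : TM2.Cfg Γ Λ σ} (hc₀ : c₀.l ∈ S.insertNone) :
    Satisfiable (haltFormula M S c₀) ↔ (StateTransition.eval (TM2.step M) c₀).Dom :=
  ⟨eval_dom_of_satisfiable hM hc₀, satisfiable_of_eval_dom hM hc₀⟩

theorem sentence_haltFormula (c₀ : TM2.Cfg Γ Λ σ) : Sentence (haltFormula M S c₀) :=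
  sentence_ex_all_ex (by
    simp [initFormula, stepClause, stepFormula, labelIs, varIs, countIsPrefix, stackIs,
      qfBelow_spell, qfBelow_cellIs, qfBelow_execStmt])

lemma primrecCode_haltFormula {α : Type*} [Primcodable α] (M : Λ → TM2.Stmt Γ Λ σ)
    (S : Finset Λ) (l : Option Λ) (v : σ) {stk : α → ∀ k, List (Γ k)}
    (hstk : ∀ k, PrimrecCode fun a => stackIs 0 k (stk a k)) :
    PrimrecCode fun a => haltFormula M S ⟨l, v, stk a⟩ :=
  .ex 0 <| .all 1 <| .ex 2 <| .and_
    (.and_ (.const (labelIs S 0 l)) (.and_ (.const (varIs 0 v)) (.and_ (.const _)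
      (.bigAnd_map fun k _ => hstk k))))
    (.const _)

end TM2Encoding

open Turing PartrecToTM2 ToPartrec

/-- Takes `e` in the form `2 ^ e - 1`, which `trList` writes as `bit1 ^ e`. -/
def unaryDiag : ℕ →. ℕ := fun m =>
  (Nat.rfind fun k => Part.some (decide (m + 1 = 2 ^ k))).bind fun k =>
    (Denumerable.ofNat Nat.Partrec.Code k).eval k

lemma partrec_unaryDiag : Partrec unaryDiag := by
  have hpow : Primrec₂ fun a b : ℕ => a ^ b :=
    Primrec₂.unpaired.1 (Primrec.nat_iff.2 Nat.Primrec.pow)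
  have htest : Primrec₂ fun m k : ℕ => decide (m + 1 = 2 ^ k) :=
    PrimrecPred.decide (p := fun a : ℕ × ℕ => a.1 + 1 = 2 ^ a.2)
      (Primrec.eq.comp (Primrec.succ.comp .fst) (hpow.comp (.const 2) .snd))
  exact (Partrec.rfind htest.to_comp.partrec₂).bind
    (Nat.Partrec.Code.eval_part.comp ((Computable.ofNat _).comp .snd) .snd)

lemma unaryDiag_two_pow_sub_one_dom (e : ℕ) :
    (unaryDiag (2 ^ e - 1)).Dom ↔ ((Denumerable.ofNat Nat.Partrec.Code e).eval e).Dom := by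
  have he : e ∈ Nat.rfind fun k => Part.some (decide (2 ^ e - 1 + 1 = 2 ^ k)) := by
    refine Nat.mem_rfind.2 ⟨by simp [Nat.sub_add_cancel Nat.one_le_two_pow], fun hk => ?_⟩
    have := Nat.pow_lt_pow_right (by norm_num : 1 < 2) hk
    simp [Nat.sub_add_cancel Nat.one_le_two_pow]
    omega
  simp only [unaryDiag, Part.dom_iff_mem, Part.mem_bind_iff]
  exact ⟨fun ⟨b, k, hk, hb⟩ => ⟨b, Part.mem_unique hk he ▸ hb⟩, fun ⟨b, hb⟩ => ⟨b, e, he, hb⟩⟩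

noncomputable def unaryDiagCode : Code :=
  (Code.exists_code (Nat.Partrec'.part_iff₁.2 partrec_unaryDiag)).choose

lemma unaryDiagCode_eval_dom (m : ℕ) : (unaryDiagCode.eval [m]).Dom ↔ (unaryDiag m).Dom := by
  have h : unaryDiagCode.eval [m] = pure <$> unaryDiag m :=
    (Code.exists_code (Nat.Partrec'.part_iff₁.2 partrec_unaryDiag)).choose_spec
      (m ::ᵥ List.Vector.nil)
  rw [h]
  rfl

lemma trNum_bit1 (n : Num) : trNum n.bit1 = Γ'.bit1 :: trNum n := by cases n <;> rfl

lemma trList_two_pow_sub_one (e : ℕ) :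
    trList [2 ^ e - 1] = List.replicate e Γ'.bit1 ++ [Γ'.cons] := by
  suffices trNat (2 ^ e - 1) = List.replicate e Γ'.bit1 by simp [this]
  induction e with
  | zero => simp
  | succ e ih =>
    have h : ((2 ^ (e + 1) - 1 : ℕ) : Num) = Num.bit1 ((2 ^ e - 1 : ℕ) : Num) := by
      rw [← Num.to_nat_inj, Num.cast_bit1, Num.to_of_nat, Num.to_of_nat, pow_succ]
      have := Nat.one_le_two_pow (n := e)
      omega
    rw [trNat, h, trNum_bit1, ← trNat, ih, List.replicate_succ]

instance : Fintype K' :=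
  ⟨⟨{K'.main, K'.rev, K'.aux, K'.stack}, by decide⟩, fun k => by cases k <;> decide⟩

noncomputable def haltingReduction (e : ℕ) : HLTL :=
  TM2Encoding.haltFormula tr (codeSupp unaryDiagCode Cont'.halt) (init unaryDiagCode [2 ^ e - 1])

lemma satisfiable_haltingReduction_iff (e : ℕ) :
    HLTL.Satisfiable (haltingReduction e) ↔
      ((Denumerable.ofNat Nat.Partrec.Code e).eval e).Dom := by
  refine (TM2Encoding.satisfiable_haltFormula_iff (tr_supports _ _).2
    (Finset.some_mem_insertNone.2 (tr_supports _ _).1)).trans ?_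
  rw [tr_eval, Part.map_eq_map, Part.map_Dom, unaryDiagCode_eval_dom,
    unaryDiag_two_pow_sub_one_dom]

lemma primrecCode_haltingReduction : HLTL.PrimrecCode haltingReduction := by
  refine TM2Encoding.primrecCode_haltFormula _ _ _ _ fun k => ?_
  cases k
  · simp only [K'.elim, trList_two_pow_sub_one, TM2Encoding.stackIs_replicate_append]
    exact HLTL.PrimrecCode.iterate_and_next _ _
  all_goals exact HLTL.PrimrecCode.const _

/-- HyperLTL-SAT is RE-hard: the halting problem (the set of codes `e` such
that the `e`-th partial computable function halts on input `e`) many-one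
reduces to the set of Gödel codes of satisfiable HyperLTL formulas. -/
theorem hyperLTLSat_re_hard :
    (fun e : ℕ => ((Denumerable.ofNat Nat.Partrec.Code e).eval e).Dom) ≤₀
      HyperLTLSatCode := by
  refine ⟨fun e => HLTL.encode (haltingReduction e), primrecCode_haltingReduction.to_comp,
    fun e => ⟨fun h => ?_, fun ⟨ψ, _, hψ, hsat⟩ => ?_⟩⟩
  · exact ⟨_, TM2Encoding.sentence_haltFormula _, rfl, (satisfiable_haltingReduction_iff e).2 h⟩
  · rw [HLTL.encode_injective hψ] at hsat
    exact (satisfiable_haltingReduction_iff e).1 hsat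
end

section
/- Observational determinism does not imply generalized noninterference: there exists a nonempty set T of traces such that OD(T) holds but GNI(T) fails. -/
/-- A trace: at each step, a high-security input, a low-security input,
and a low-security output. -/
abbrev SecTrace : Type := ℕ → Bool × Bool × Bool

/-- High-security input at step `n`. -/
def hi (t : SecTrace) (n : ℕ) : Bool := (t n).1

/-- Low-security input at step `n`. -/
def li (t : SecTrace) (n : ℕ) : Bool := (t n).2.1

/-- Low-security output at step `n`. -/
def lo (t : SecTrace) (n : ℕ) : Bool := (t n).2.2

/-- Observational determinism. -/
def OD (T : Set SecTrace) : Prop :=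
  ∀ t₁ ∈ T, ∀ t₂ ∈ T, li t₁ 0 = li t₂ 0 → ∀ n, lo t₁ n = lo t₂ n

/-- Globally-guarded observational determinism. -/
def GOD (T : Set SecTrace) : Prop :=
  ∀ t₁ ∈ T, ∀ t₂ ∈ T, (∀ n, li t₁ n = li t₂ n) → ∀ n, lo t₁ n = lo t₂ n

/-- Weak-until observational determinism. -/
def WOD (T : Set SecTrace) : Prop :=
  ∀ t₁ ∈ T, ∀ t₂ ∈ T,
    (∀ n, li t₁ n = li t₂ n) ∨
      ∃ i, lo t₁ i ≠ lo t₂ i ∧ ∀ j < i, li t₁ j = li t₂ j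

/-- Generalized noninterference. -/
def GNI (T : Set SecTrace) : Prop :=
  ∀ t₁ ∈ T, ∀ t₂ ∈ T, ∃ t₃ ∈ T,
    (∀ n, hi t₃ n = hi t₁ n) ∧ (∀ n, lo t₃ n = lo t₂ n)

/-- Noninference. -/
def NI (T : Set SecTrace) : Prop :=
  ∀ t₁ ∈ T, ∃ t₂ ∈ T, (∀ n, hi t₂ n = false) ∧ (∀ n, lo t₂ n = lo t₁ n)

/-- Observational determinism does not imply generalized noninterference. -/
theorem od_not_implies_gni :
    ∃ T : Set SecTrace, T.Nonempty ∧ OD T ∧ ¬ GNI T := by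
  refine ⟨{fun _ => (true, true, true), fun _ => (false, false, false)}, ⟨_, Or.inl rfl⟩, ?_, ?_⟩
  · rintro t₁ (rfl | rfl) t₂ (rfl | rfl) h n <;> simp_all [li, lo]
  · intro h
    obtain ⟨t₃, ht₃, hhi, hlo⟩ :=
      h (fun _ => (true, true, true)) (Or.inl rfl) (fun _ => (false, false, false)) (Or.inr rfl)
    rcases ht₃ with rfl | rfl
    · simpa [lo] using hlo 0
    · simpa [hi] using hhi 0
end

section
/- Observational determinism does not imply noninference: there exists a nonempty set T of traces such that OD(T) holds but NI(T) fails. -/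
/-- Observational determinism does not imply noninference. -/
theorem od_not_implies_ni :
    ∃ T : Set SecTrace, T.Nonempty ∧ OD T ∧ ¬ NI T := by
  refine ⟨{fun _ => (true, true, true)}, ⟨_, rfl⟩, ?_, ?_⟩
  · intro t₁ h₁ t₂ h₂ _ n
    simp only [Set.mem_singleton_iff] at h₁ h₂
    subst h₁; subst h₂; rfl
  · intro h
    obtain ⟨t₂, ht₂, hhi, _⟩ := h _ rfl
    simp only [Set.mem_singleton_iff] at ht₂
    subst ht₂
    simpa [hi] using hhi 0
end

section
/- The globally-guarded variant of observational determinism does not imply generalized noninterference: there exists a nonempty set T of traces such that GOD(T) holds but GNI(T) fails. -/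
/-- Globally-guarded observational determinism does not imply generalized noninterference. -/
theorem god_not_implies_gni :
    ∃ T : Set SecTrace, T.Nonempty ∧ GOD T ∧ ¬ GNI T := by
  refine ⟨{fun _ => (false, false, false), fun _ => (true, true, true)},
    ⟨_, Or.inl rfl⟩, ?_, ?_⟩
  · rintro t₁ (rfl | rfl) t₂ (rfl | rfl) h n
    · rfl
    · simpa [li] using h 0
    · simpa [li] using h 0
    · rfl
  · intro h
    obtain ⟨t₃, ht₃, hh, hl⟩ := h (fun _ => (false, false, false)) (Or.inl rfl)
      (fun _ => (true, true, true)) (Or.inr rfl)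
    rcases ht₃ with rfl | rfl
    · simpa [lo] using hl 0
    · simpa [hi] using hh 0
end

section
/- The weak-until variant of observational determinism does not imply noninference: there exists a nonempty set T of traces such that WOD(T) holds but NI(T) fails. -/
/-- Weak-until observational determinism does not imply noninference. -/
theorem wod_not_implies_ni :
    ∃ T : Set SecTrace, T.Nonempty ∧ WOD T ∧ ¬ NI T := by
  refine ⟨{fun _ => (true, true, true)}, ⟨_, rfl⟩, ?_, ?_⟩
  · intro t₁ h₁ t₂ h₂
    left
    simp_all
  · intro h
    obtain ⟨t₂, ht₂, hhi, _⟩ := h _ rfl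
    have := hhi 0
    rw [Set.mem_singleton_iff] at ht₂
    simp [ht₂, hi] at this
end

section
/- Noninference and generalized noninterference are not equivalent as hyperproperties: there exists a nonempty set T of traces on which exactly one of NI(T) and GNI(T) holds. -/
/-- Noninference and generalized noninterference are not equivalent hyperproperties: on some nonempty trace set exactly one of them holds. -/
theorem ni_not_equiv_gni :
    ∃ T : Set SecTrace, T.Nonempty ∧ Xor' (NI T) (GNI T) := by
  refine ⟨{fun _ => (true, false, false)}, ⟨_, rfl⟩, Or.inr ⟨?_, ?_⟩⟩
  · intro t₁ ht₁ t₂ ht₂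
    exact ⟨t₁, ht₁, fun n => rfl, by simp_all [lo]⟩
  · intro h
    obtain ⟨t₂, ht₂, hh, _⟩ := h _ rfl
    simp only [Set.mem_singleton_iff] at ht₂
    have := hh 0
    simp [ht₂, hi] at this
end
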